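/- arXiv:2211.02170 — 3 statements merged into one kernel-verified Lean document; each statement's English description precedes it below -/
import Mathlib

section
/- Let k ≥ 2 and n ≥ binom(k+1, 2). An S-block [α|β] ∈ S-Block(n) belongs to A(n, k, k−1) if and only if [τ_k(n)|τ'_{k−1}(n)] ⪯ [α|β] and [α|β] ⪯ [α'|β'] for some [α'|β'] ∈ (Max)^n_{k,k−1}. Consequently A(n, k, k−1) is an amphora in S-Block(n) with minimum element [τ_k(n)|τ'_{k−1}(n)] and with antichain of maximal elements (Max)^n_{k,k−1}. -/
/-- A partition: a non-increasing list of positive integers. -/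
def IsPartition (π : List ℕ) : Prop :=
  π.Pairwise (· ≥ ·) ∧ ∀ x ∈ π, 0 < x

/-- A partition of `n` into distinct positive parts, listed in (strictly) decreasing order. -/
def DisPart (n : ℕ) (γ : List ℕ) : Prop :=
  γ.Pairwise (· > ·) ∧ (∀ x ∈ γ, 0 < x) ∧ γ.sum = n

/-- A partition of `n` into exactly `k` distinct positive parts. -/
def DisPartK (n k : ℕ) (γ : List ℕ) : Prop :=
  DisPart n γ ∧ γ.length = k

/-- `β` majorizes `α`. -/
def Majorizes (β α : List ℕ) : Prop :=
  β.sum = α.sum ∧ ∀ k ≤ min α.length β.length, (α.take k).sum ≤ (β.take k).sum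

/-- α(π): the parts `d_i − i + 1` for 1-based indices `i` with `d_i ≥ i`. -/
def alphaOf (π : List ℕ) : List ℕ :=
  (List.range π.length).filterMap
    (fun i => if i + 1 ≤ π.getD i 0 then some (π.getD i 0 - i) else none)

/-- Number of boxes of the Ferrers diagram strictly below the diagonal in (1-based) column `j`. -/
def betaColCount (π : List ℕ) (j : ℕ) : ℕ :=
  ((List.range π.length).filter (fun i => decide (j ≤ i ∧ j ≤ π.getD i 0))).length

/-- β(π): the positive column counts below the main diagonal, in decreasing order. -/
def betaOf (π : List ℕ) : List ℕ :=
  ((List.range π.length).map (fun j => betaColCount π (j + 1))).filter (fun c => c != 0)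

/-- The mark (modified Durfee number) `m(π) = max {i : d_i ≥ i − 1}` (1-based indices). -/
noncomputable def mark (π : List ℕ) : ℕ :=
  sSup {i : ℕ | 1 ≤ i ∧ i ≤ π.length ∧ i ≤ π.getD (i - 1) 0 + 1}

def IsIndepSet {V : Type*} (G : SimpleGraph V) (s : Set V) : Prop :=
  s.Pairwise (fun v w => ¬ G.Adj v w)

/-- `(K, S)` is a KS-partition of `G`. -/
def IsKS {V : Type*} [Fintype V] (G : SimpleGraph V) (K S : Finset V) : Prop :=
  (∀ v, v ∈ K ∨ v ∈ S) ∧ Disjoint K S ∧ G.IsClique (K : Set V) ∧ IsIndepSet G (S : Set V)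

def IsSplit {V : Type*} [Fintype V] (G : SimpleGraph V) : Prop :=
  ∃ K S, IsKS G K S

noncomputable def cliqueNum {V : Type*} [Fintype V] (G : SimpleGraph V) : ℕ :=
  sSup {n | ∃ s : Finset V, G.IsNClique n s}

noncomputable def indepNum {V : Type*} [Fintype V] (G : SimpleGraph V) : ℕ :=
  sSup {n | ∃ s : Finset V, IsIndepSet G (s : Set V) ∧ s.card = n}

/-- A balanced split graph: some KS-partition is simultaneously K-max and S-max. -/
def IsBalancedSplit {V : Type*} [Fintype V] (G : SimpleGraph V) : Prop :=
  IsSplit G ∧ ∃ K S, IsKS G K S ∧ K.card = cliqueNum G ∧ S.card = indepNum G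

/-- An unbalanced split graph. -/
def IsUnbalancedSplit {V : Type*} [Fintype V] (G : SimpleGraph V) : Prop :=
  IsSplit G ∧ ¬ ∃ K S, IsKS G K S ∧ K.card = cliqueNum G ∧ S.card = indepNum G

/-- `π` is the degree sequence of `G` (degrees in non-increasing order). -/
def HasDegSeq {V : Type*} [Fintype V] (G : SimpleGraph V) [DecidableRel G.Adj]
    (π : List ℕ) : Prop :=
  π.Pairwise (· ≥ ·) ∧ (π : Multiset ℕ) = Finset.univ.val.map (fun v => G.degree v)

def NoIsolated {V : Type*} [Fintype V] (G : SimpleGraph V) [DecidableRel G.Adj] : Prop :=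
  ∀ v, 0 < G.degree v

def IsThreshold {V : Type*} [Fintype V] (G : SimpleGraph V) : Prop :=
  ∃ (t : ℝ) (a : V → ℝ), 0 < t ∧ (∀ v, 0 < a v) ∧
    ∀ s : Finset V, (IsIndepSet G (s : Set V) ↔ ∑ v ∈ s, a v ≤ t)

noncomputable def chromNum {V : Type*} [Fintype V] (G : SimpleGraph V) : ℕ :=
  sInf {n | G.Colorable n}

def IsNG {V : Type*} [Fintype V] (G : SimpleGraph V) : Prop :=
  chromNum G + chromNum Gᶜ = Fintype.card V + 1

def ngA {V : Type*} [Fintype V] (G : SimpleGraph V) [DecidableRel G.Adj] : Set V :=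
  {v | G.degree v = chromNum G - 1}

def IsNG1 {V : Type*} [Fintype V] (G : SimpleGraph V) [DecidableRel G.Adj] : Prop :=
  IsNG G ∧ G.IsClique (ngA G)

def IsNG2 {V : Type*} [Fintype V] (G : SimpleGraph V) [DecidableRel G.Adj] : Prop :=
  IsNG G ∧ IsIndepSet G (ngA G)

def IsNG3 {V : Type*} [Fintype V] (G : SimpleGraph V) [DecidableRel G.Adj] : Prop :=
  IsNG G ∧ Nonempty ((G.induce (ngA G)) ≃g SimpleGraph.cycleGraph 5)

/-- `[α|β]` is an S-block for the integer `n`. -/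
def IsSBlock (n : ℕ) (α β : List ℕ) : Prop :=
  DisPart n α ∧ DisPart n β ∧ Majorizes β α ∧
    (α.length = β.length ∨ α.length = β.length + 1)

/-- `[α₁|β₁] ⪰ [α₂|β₂]` in the block order. -/
def BlockMaj (α₁ β₁ α₂ β₂ : List ℕ) : Prop :=
  Majorizes α₁ α₂ ∧ Majorizes β₂ β₁

/-- τ'_k(n) = (n − C(k,2), k−1, k−2, …, 2, 1). -/
def tauMax (n k : ℕ) : List ℕ :=
  (n - Nat.choose k 2) :: ((List.range (k - 1)).reverse.map (· + 1))

/-- τ_k(n): parts (k−i+1)+q+1 for 1 ≤ i ≤ r and (k−i+1)+q for r < i ≤ k,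
where n − C(k+1,2) = qk + r, 0 ≤ r < k. -/
def tauMin (n k : ℕ) : List ℕ :=
  (List.range k).map
    (fun i => (k - i) + (n - Nat.choose (k + 1) 2) / k +
      (if i < (n - Nat.choose (k + 1) 2) % k then 1 else 0))

/-- `β` covers `α` in `Dis(n)`. -/
def CoversDis (n : ℕ) (β α : List ℕ) : Prop :=
  DisPart n α ∧ DisPart n β ∧ Majorizes β α ∧ β ≠ α ∧
    ¬ ∃ γ, DisPart n γ ∧ Majorizes β γ ∧ Majorizes γ α ∧ γ ≠ α ∧ γ ≠ β

/-- `[α₁|β₁]` covers `[α₂|β₂]` in `S-Block(n)`. -/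
def BlockCovers (n : ℕ) (α₁ β₁ α₂ β₂ : List ℕ) : Prop :=
  IsSBlock n α₁ β₁ ∧ IsSBlock n α₂ β₂ ∧ BlockMaj α₁ β₁ α₂ β₂ ∧ ¬(α₁ = α₂ ∧ β₁ = β₂) ∧
    ¬ ∃ α β, IsSBlock n α β ∧ BlockMaj α₁ β₁ α β ∧ BlockMaj α β α₂ β₂ ∧
      ¬(α = α₁ ∧ β = β₁) ∧ ¬(α = α₂ ∧ β = β₂)

/-- `[α|β]` is a threshold-covered block: member of TC(n). -/
def InTC (n : ℕ) (α β : List ℕ) : Prop :=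
  IsSBlock n α β ∧ CoversDis n β α

def IsLubDis (n : ℕ) (a b c : List ℕ) : Prop :=
  Majorizes c a ∧ Majorizes c b ∧
    ∀ d, DisPart n d → Majorizes d a → Majorizes d b → Majorizes d c

def IsGlbDis (n : ℕ) (a b c : List ℕ) : Prop :=
  Majorizes a c ∧ Majorizes b c ∧
    ∀ d, DisPart n d → Majorizes a d → Majorizes b d → Majorizes c d

/-
Everything reduces to elementwise comparisons of sorted lists. If `α` has `k` distinct parts
then `α i + i` is non-increasing in `i`, whereas `τ_k(n) i + i` only takes the two values
`c = k + q` and `c + 1`. Hence, at any cut `j`, either some `α i + i` with `i ≥ j` exceeds `c`,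
and then `α` dominates `τ_k(n)` entrywise before `j`, or `τ_k(n)` dominates `α` entrywise from
`j` on; either way the prefix sums of `α` up to `j` dominate those of `τ_k(n)`. Dually, the tail
`k - 2, …, 1` of `τ'_{k-1}(n)` is the smallest possible tail of a partition into `k - 1`
distinct parts.

For the maximal blocks, take `α'` maximal among the `k`-part partitions between `α` and `β`, and
then `β'` minimal among the `(k - 1)`-part partitions between `α'` and `β`. The number of parts
is antitone under majorization, so anything strictly between `α'` and `β'` would have `k` or
`k - 1` parts and contradict one of the two extremal choices; thus `β'` covers `α'`.
-/

theorem Majorizes.refl (α : List ℕ) : Majorizes α α := ⟨rfl, fun _ _ => le_rfl⟩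

theorem Majorizes.length_le {α β : List ℕ} (h : Majorizes β α) (hβ : ∀ x ∈ β, 0 < x) :
    β.length ≤ α.length := by
  by_contra! hlt
  have hprefix := h.2 α.length (by omega)
  rw [List.take_length] at hprefix
  have htail : 0 < (β.drop α.length).sum :=
    List.sum_pos _ (fun x hx => hβ x (List.mem_of_mem_drop hx)) (by simpa using hlt)
  have := List.sum_take_add_sum_drop β α.length
  have := h.1
  omega

theorem Majorizes.trans {α β γ : List ℕ} (hγβ : Majorizes γ β) (hβα : Majorizes β α)
    (hγ : ∀ x ∈ γ, 0 < x) : Majorizes γ α := by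
  have := hγβ.length_le hγ
  exact ⟨hγβ.1.trans hβα.1, fun j hj =>
    (hβα.2 j (by omega)).trans (hγβ.2 j (by omega))⟩

theorem Majorizes.sum_take_le {α β : List ℕ} (h : Majorizes β α) (hlen : α.length = β.length)
    (j : ℕ) : (α.take j).sum ≤ (β.take j).sum := by
  rcases le_or_gt j α.length with hj | hj
  · exact h.2 j (by omega)
  · rw [List.take_of_length_le hj.le, List.take_of_length_le (by omega), h.1]

theorem eq_of_sum_take_eq {α β : List ℕ} (hlen : α.length = β.length)
    (h : ∀ j, (α.take j).sum = (β.take j).sum) : α = β :=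
  List.ext_getElem hlen fun i hα hβ => by
    have := List.sum_take_succ α i hα
    have := List.sum_take_succ β i hβ
    have := h i
    have := h (i + 1)
    omega

theorem sum_le_sum_of_getElem_le {a b : List ℕ} (hlen : a.length = b.length)
    (h : ∀ i (ha : i < a.length) (hb : i < b.length), a[i] ≤ b[i]) : a.sum ≤ b.sum :=
  List.Forall₂.sum_le_sum (List.forall₂_iff_get.2 ⟨hlen, fun i ha hb => h i ha hb⟩)

theorem majorizes_of_forall_take_or_drop {a b : List ℕ} (hlen : a.length = b.length)
    (hsum : a.sum = b.sum)
    (h : ∀ j, (∀ i, i < j → ∀ (ha : i < a.length) (hb : i < b.length), b[i] ≤ a[i]) ∨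
      (∀ i, j ≤ i → ∀ (ha : i < a.length) (hb : i < b.length), a[i] ≤ b[i])) :
    Majorizes a b := by
  refine ⟨hsum, fun j _ => ?_⟩
  rcases h j with hlow | hhigh
  · exact sum_le_sum_of_getElem_le (by simp [hlen]) fun i hb ha => by
      simp only [List.length_take] at ha hb
      simpa using hlow i (by omega) (by omega) (by omega)
  · have hdrop : (a.drop j).sum ≤ (b.drop j).sum :=
      sum_le_sum_of_getElem_le (by simp [hlen]) fun i ha hb => by
        simp only [List.length_drop] at ha hb
        simpa using hhigh (j + i) (by omega) (by omega) (by omega)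
    have := List.sum_take_add_sum_drop a j
    have := List.sum_take_add_sum_drop b j
    omega

theorem List.Pairwise.getElem_add_le {l : List ℕ} (hl : l.Pairwise (· > ·)) {i j : ℕ}
    (hij : i ≤ j) (hj : j < l.length) : l[j] + j ≤ l[i] + i := by
  induction j, hij using Nat.le_induction with
  | base => rfl
  | succ j hij ih =>
    have := List.pairwise_iff_getElem.1 hl j (j + 1) (by omega) hj (by omega)
    have := ih (by omega)
    omega

section Extremal

theorem finite_setOf_disPart (n : ℕ) : {γ | DisPart n γ}.Finite := by
  refine (List.finite_toSet (List.range (n + 1)).reverse.sublists).subset fun γ hγ => ?_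
  have hsub : γ ⊆ (List.range (n + 1)).reverse := by
    intro x hx
    have := List.le_sum_of_mem hx
    have := hγ.2.2
    simp only [List.mem_reverse, List.mem_range]
    omega
  exact List.mem_sublists.2 <| List.sublist_of_subperm_of_pairwise (hγ.1.nodup.subperm hsub) hγ.1
    (List.pairwise_reverse.2 List.pairwise_lt_range)

variable {n ℓ : ℕ} {p : List ℕ → Prop}

theorem exists_maximal_majorizing (hp : ∀ γ, p γ → DisPartK n ℓ γ) (hne : ∃ γ, p γ) :
    ∃ γ, p γ ∧ ∀ δ, p δ → Majorizes δ γ → δ = γ := by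
  have hfin : {γ | p γ}.Finite := (finite_setOf_disPart n).subset fun γ hγ => (hp γ hγ).1
  obtain ⟨γ, hγ, hmax⟩ := hfin.exists_maximalFor (fun γ j => (γ.take j).sum) _ hne
  refine ⟨γ, hγ, fun δ hδ hδγ => ?_⟩
  have hlen : γ.length = δ.length := (hp γ hγ).2.trans (hp δ hδ).2.symm
  have hle := hmax hδ (hδγ.sum_take_le hlen)
  exact eq_of_sum_take_eq hlen.symm fun j => le_antisymm (hle j) (hδγ.sum_take_le hlen j)

theorem exists_minimal_majorized (hp : ∀ γ, p γ → DisPartK n ℓ γ) (hne : ∃ γ, p γ) :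
    ∃ γ, p γ ∧ ∀ δ, p δ → Majorizes γ δ → δ = γ := by
  have hfin : {γ | p γ}.Finite := (finite_setOf_disPart n).subset fun γ hγ => (hp γ hγ).1
  obtain ⟨γ, hγ, hmin⟩ := hfin.exists_minimalFor (fun γ j => (γ.take j).sum) _ hne
  refine ⟨γ, hγ, fun δ hδ hγδ => ?_⟩
  have hlen : δ.length = γ.length := (hp δ hδ).2.trans (hp γ hγ).2.symm
  have hle := hmin hδ (hγδ.sum_take_le hlen)
  exact eq_of_sum_take_eq hlen fun j => le_antisymm (hγδ.sum_take_le hlen j) (hle j)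

theorem exists_coversDis_between {α β : List ℕ} (hα : DisPartK n (ℓ + 1) α)
    (hβ : DisPartK n ℓ β) (hβα : Majorizes β α) :
    ∃ α' β', CoversDis n β' α' ∧ DisPartK n (ℓ + 1) α' ∧ DisPartK n ℓ β' ∧
      Majorizes α' α ∧ Majorizes β β' := by
  obtain ⟨α', ⟨hα', hα'α, hβα'⟩, hα'max⟩ :=
    exists_maximal_majorizing (p := fun γ => DisPartK n (ℓ + 1) γ ∧ Majorizes γ α ∧ Majorizes β γ)
      (fun γ hγ => hγ.1) ⟨α, hα, .refl α, hβα⟩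
  obtain ⟨β', ⟨hβ', hβ'α', hββ'⟩, hβ'min⟩ :=
    exists_minimal_majorized (p := fun γ => DisPartK n ℓ γ ∧ Majorizes γ α' ∧ Majorizes β γ)
      (fun γ hγ => hγ.1) ⟨β, hβ, hβα', .refl β⟩
  refine ⟨α', β', ⟨hα'.1, hβ'.1, hβ'α', fun h => by simpa [h, hα'.2] using hβ'.2, ?_⟩,
    hα', hβ', hα'α, hββ'⟩
  rintro ⟨γ, hγ, hβ'γ, hγα', hγα'ne, hγβ'ne⟩
  have hβ'γlen : ℓ ≤ γ.length := hβ'.2 ▸ hβ'γ.length_le hβ'.1.2.1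
  have hγα'len : γ.length ≤ ℓ + 1 := hα'.2 ▸ hγα'.length_le hγ.2.1
  have hβγ := hββ'.trans hβ'γ hβ.1.2.1
  rcases (show γ.length = ℓ + 1 ∨ γ.length = ℓ by omega) with hlen | hlen
  · exact hγα'ne (hα'max γ ⟨⟨hγ, hlen⟩, hγα'.trans hα'α hγ.2.1, hβγ⟩ hγα')
  · exact hγβ'ne (hβ'min γ ⟨⟨hγ, hlen⟩, hγα', hβγ⟩ hβ'γ)

end Extremal

section Tau

variable {n k : ℕ}

theorem length_tauMin : (tauMin n k).length = k := by simp [tauMin]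

theorem sum_tauMin (hk : 0 < k) (hn : (k + 1).choose 2 ≤ n) : (tauMin n k).sum = n := by
  set m := n - (k + 1).choose 2
  have hstair : ∑ i ∈ Finset.range k, (k - i) = (k + 1).choose 2 := by
    have := Finset.sum_range_reflect id (k + 1)
    simp only [Finset.sum_range_succ, id, add_tsub_cancel_right, tsub_self, add_zero] at this
    rw [this, Finset.sum_range_id, ← Nat.choose_two_right, Nat.choose_succ_succ',
      Nat.choose_one_right, add_comm]
  have hextra : {i ∈ Finset.range k | i < m % k} = Finset.range (m % k) := by
    ext i
    simp only [Finset.mem_filter, Finset.mem_range]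
    have := Nat.mod_lt m hk
    omega
  change ∑ i ∈ Finset.range k, (k - i + m / k + if i < m % k then 1 else 0) = n
  rw [Finset.sum_add_distrib, Finset.sum_add_distrib, Finset.sum_boole, hextra, hstair,
    Finset.sum_const, Finset.card_range, Finset.card_range, smul_eq_mul]
  have := Nat.div_add_mod m k
  push_cast
  omega

theorem majorizes_tauMin (hk : 0 < k) (hn : (k + 1).choose 2 ≤ n) {α : List ℕ}
    (hα : DisPartK n k α) : Majorizes α (tauMin n k) := by
  obtain ⟨⟨hdec, -, hsum⟩, hlen⟩ := hα
  set c := k + (n - (k + 1).choose 2) / k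
  have hτ : ∀ i (hi : i < (tauMin n k).length),
      c ≤ (tauMin n k)[i] + i ∧ (tauMin n k)[i] + i ≤ c + 1 := by
    intro i hi
    simp only [length_tauMin] at hi
    simp only [tauMin, List.getElem_map, List.getElem_range, c]
    split_ifs <;> omega
  refine majorizes_of_forall_take_or_drop (by rw [hlen, length_tauMin])
    (by rw [hsum, sum_tauMin hk hn]) fun j => ?_
  by_cases hsmall : ∀ i, j ≤ i → ∀ (hi : i < α.length), α[i] + i ≤ c
  · exact .inr fun i hji ha hb => by
      have := hsmall i hji ha
      have := (hτ i hb).1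
      omega
  · push Not at hsmall
    obtain ⟨i₀, hji₀, hi₀, hbig⟩ := hsmall
    exact .inl fun i hij ha hb => by
      have := hdec.getElem_add_le (show i ≤ i₀ by omega) hi₀
      have := (hτ i hb).2
      omega

theorem length_tauMax (hK : 0 < k) : (tauMax n k).length = k := by
  simp [tauMax]
  omega

theorem sum_tauMax (hn : k.choose 2 ≤ n) : (tauMax n k).sum = n := by
  have htail : ((List.range (k - 1)).reverse.map (· + 1)).sum = k.choose 2 := by
    rw [List.map_reverse, List.sum_reverse]
    change ∑ i ∈ Finset.range (k - 1), (i + 1) = k.choose 2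
    rcases k with _ | k
    · rfl
    · have := Finset.sum_range_succ' (fun i => i) k
      rw [Finset.sum_range_id, ← Nat.choose_two_right] at this
      simpa using this.symm
  simp only [tauMax, List.sum_cons, htail]
  omega

theorem getElem_tauMax {i : ℕ} (hi : 0 < i) (hik : i < (tauMax n k).length) :
    (tauMax n k)[i] = k - i := by
  obtain ⟨i, rfl⟩ := Nat.exists_eq_add_of_lt hi
  simp only [tauMax, List.length_cons, List.length_map, List.length_reverse,
    List.length_range] at hik
  simp [tauMax, List.getElem_reverse]
  omega

theorem tauMax_pos (hK : 0 < k) (hn : (k + 1).choose 2 ≤ n) : ∀ x ∈ tauMax n k, 0 < x := by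
  have : (k + 1).choose 2 = k.choose 2 + k := by
    rw [Nat.choose_succ_succ', Nat.choose_one_right, add_comm]
  simp only [tauMax, List.mem_cons, List.mem_map, List.mem_reverse, List.mem_range]
  rintro x (rfl | ⟨i, -, rfl⟩) <;> omega

theorem tauMax_majorizes (hK : 0 < k) (hn : (k + 1).choose 2 ≤ n) {β : List ℕ}
    (hβ : DisPartK n k β) : Majorizes (tauMax n k) β := by
  obtain ⟨⟨hdec, hpos, hsum⟩, hlen⟩ := hβ
  have hn' : k.choose 2 ≤ n := (Nat.choose_le_choose 2 k.le_succ).trans hn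
  refine majorizes_of_forall_take_or_drop (by rw [length_tauMax hK, hlen])
    (by rw [sum_tauMax hn', hsum]) fun j => ?_
  rcases j with _ | j
  · exact .inl fun i hi => absurd hi (Nat.not_lt_zero i)
  · refine .inr fun i hji ha hb => ?_
    rw [getElem_tauMax (by omega) ha]
    have := hdec.getElem_add_le (show i ≤ k - 1 by omega) (by omega)
    have := hpos _ (List.getElem_mem (show k - 1 < β.length by omega))
    omega

end Tau

/-- For k ≥ 2 and n ≥ C(k+1,2), an S-block [α|β] ∈ S-Block(n) belongs to
A(n,k,k−1) (i.e. α ∈ Dis_k(n), β ∈ Dis_{k−1}(n)) iff [τ_k(n)|τ'_{k−1}(n)] ⪯ [α|β] and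
[α|β] ⪯ [α'|β'] for some [α'|β'] ∈ (Max)ⁿ_{k,k−1}; hence A(n,k,k−1) is an amphora with
minimum element [τ_k(n)|τ'_{k−1}(n)] and maximal antichain (Max)ⁿ_{k,k−1}. -/
theorem stmt15 (n k : ℕ) (hk : 2 ≤ k) (hn : Nat.choose (k + 1) 2 ≤ n)
    (α β : List ℕ) (h : IsSBlock n α β) :
    (DisPartK n k α ∧ DisPartK n (k - 1) β) ↔
      (BlockMaj α β (tauMin n k) (tauMax n (k - 1)) ∧
        ∃ α' β', InTC n α' β' ∧ DisPartK n k α' ∧ DisPartK n (k - 1) β' ∧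
          BlockMaj α' β' α β) := by
  obtain ⟨hα, hβ, hβα, -⟩ := h
  obtain ⟨ℓ, rfl⟩ : ∃ ℓ, k = ℓ + 1 := ⟨k - 1, by omega⟩
  rw [Nat.add_sub_cancel]
  have hℓ : 0 < ℓ := by omega
  have hnℓ : (ℓ + 1).choose 2 ≤ n := (Nat.choose_le_choose 2 ℓ.succ.le_succ).trans hn
  constructor
  · rintro ⟨hαk, hβℓ⟩
    obtain ⟨α', β', hcov, hα', hβ', hα'α, hββ'⟩ := exists_coversDis_between hαk hβℓ hβα
    exact ⟨⟨majorizes_tauMin ℓ.succ_pos hn hαk, tauMax_majorizes hℓ hnℓ hβℓ⟩, α', β',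
      ⟨⟨hα'.1, hβ'.1, hcov.2.2.1, .inr (by rw [hα'.2, hβ'.2])⟩, hcov⟩, hα', hβ', hα'α, hββ'⟩
  · rintro ⟨⟨hατ, hτβ⟩, α', β', -, hα', hβ', hα'α, hββ'⟩
    have hα_le : α.length ≤ ℓ + 1 := length_tauMin (n := n) (k := ℓ + 1) ▸ hατ.length_le hα.2.1
    have hα_ge : ℓ + 1 ≤ α.length := hα'.2 ▸ hα'α.length_le hα'.1.2.1
    have hβ_le : β.length ≤ ℓ := hβ'.2 ▸ hββ'.length_le hβ.2.1
    have hβ_ge : ℓ ≤ β.length := length_tauMax (n := n) hℓ ▸ hτβ.length_le (tauMax_pos hℓ hnℓ)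
    exact ⟨⟨hα, by omega⟩, ⟨hβ, by omega⟩⟩
end

section
/- Let G be an unbalanced split graph with no isolated vertices and with degree sequence π. Then G is an NG-1 graph if and only if the smallest part of β(π) equals 1, and G is an NG-2 graph if and only if the smallest part of α(π) is at least 2. -/
/-
Take a KS-partition `(K, S)` with `|K|` maximal. Then no vertex of `S` is complete to `K`, so
`ω(G) = χ(G) = |K|` (colour each `w ∈ S` like one of its non-neighbours in `K`). As `G` is
unbalanced, a maximum independent set is `S ∪ {u}` for some `u ∈ K` without neighbours in `S`;
`(S ∪ {u}, K \ {u})` is then a KS-partition of `Ḡ` of the same kind, so `χ(Ḡ) = |S| + 1` and `G`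
is an NG-graph. Vertices of `K` have degree `≥ |K| - 1`, those of `S` degree `≤ |K| - 1`, and `u`
degree exactly `|K| - 1`. Hence `A` is a clique iff no vertex of `S` has degree `|K| - 1`, and
independent iff `u` is the only such vertex of `K`. In the degree sequence, with `m = |K| - 1` and
0-based indices, `d_m = m`; so the last part of `β(π)` is `#{i | d_i ≥ m} - m`, and the smallest
part of `α(π)` is `d_{m-1} - (m - 1)`, which count exactly these vertices.
-/

open Finset

namespace List

variable {π : List ℕ}

theorem antitone_getD_of_pairwise_ge (hπ : π.Pairwise (· ≥ ·)) : Antitone (π.getD · 0) := by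
  intro i j hij
  by_cases hj : j < π.length
  · simp only [getD_eq_getElem (hn := hj), getD_eq_getElem (hn := hij.trans_lt hj)]
    rcases hij.lt_or_eq with hij | rfl
    · exact pairwise_iff_getElem.1 hπ i j (hij.trans hj) hj hij
    · exact le_rfl
  · simp only [getD_eq_default (hn := not_lt.1 hj), zero_le]

theorem le_getD_iff_lt_countP (hπ : π.Pairwise (· ≥ ·)) (c : ℕ) {i : ℕ} (hi : i < π.length) :
    c ≤ π.getD i 0 ↔ i < π.countP (c ≤ ·) := by
  induction π generalizing i with
  | nil => simp at hi
  | cons a t ih =>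
    obtain ⟨ha, ht⟩ := pairwise_cons.1 hπ
    by_cases hca : c ≤ a
    · cases i with
      | zero => simp [hca]
      | succ i => simpa [hca] using ih ht (by simpa using hi)
    · have hlt : ∀ x ∈ a :: t, x < c := by
        simp only [mem_cons, forall_eq_or_imp]
        exact ⟨by omega, fun x hx => by have := ha x hx; omega⟩
      have hcount : (a :: t).countP (c ≤ ·) = 0 :=
        countP_eq_zero.2 fun x hx => by simpa using hlt x hx
      have := hlt _ (getD_eq_getElem _ 0 hi ▸ getElem_mem hi)
      omega

theorem getD_eq_of_countP (hπ : π.Pairwise (· ≥ ·)) {m : ℕ} (h₁ : m < π.countP (m ≤ ·))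
    (h₂ : π.countP (m + 1 ≤ ·) ≤ m) : π.getD m 0 = m := by
  have hm : m < π.length := h₁.trans_le countP_le_length
  have := (le_getD_iff_lt_countP hπ m hm).2 h₁
  have := mt (le_getD_iff_lt_countP hπ (m + 1) hm).1
  omega

theorem lt_length_of_getD_eq {m : ℕ} (hm : π.getD m 0 = m) (hm0 : 0 < m) : m < π.length := by
  by_contra hlen
  rw [getD_eq_default π 0 (not_lt.1 hlen)] at hm
  omega

end List

section Partition

variable {π : List ℕ}

theorem mem_alphaOf {x : ℕ} :
    x ∈ alphaOf π ↔ ∃ i < π.length, i + 1 ≤ π.getD i 0 ∧ π.getD i 0 - i = x := by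
  simp [alphaOf]

theorem forall_two_le_alphaOf_iff (hπ : π.Pairwise (· ≥ ·)) {m : ℕ} (hm : π.getD m 0 = m) :
    (∀ x ∈ alphaOf π, 2 ≤ x) ↔ m ≤ π.countP (m + 1 ≤ ·) := by
  have anti := List.antitone_getD_of_pairwise_ge hπ
  constructor
  · intro h
    rcases m with _ | m
    · exact Nat.zero_le _
    have hlen := List.lt_length_of_getD_eq hm m.succ_pos
    have hle : m + 1 ≤ π.getD m 0 := hm ▸ anti m.le_succ
    have := h _ (mem_alphaOf.2 ⟨m, by omega, hle, rfl⟩)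
    have := (List.le_getD_iff_lt_countP hπ (m + 1 + 1) (by omega : m < π.length)).1 (by omega)
    omega
  · rintro h x hx
    obtain ⟨i, hi, hle, rfl⟩ := mem_alphaOf.1 hx
    have him : i < m := by
      by_contra him
      have : π.getD i 0 ≤ π.getD m 0 := anti (not_lt.1 him)
      omega
    have := (List.le_getD_iff_lt_countP hπ (m + 1) hi).2 (by omega)
    omega

theorem betaColCount_pos {m j : ℕ} (hm : π.getD m 0 = m) (hlen : m < π.length) (hj : j ≤ m) :
    0 < betaColCount π j :=
  List.length_pos_of_mem (a := m) (by
    rw [List.getD_eq_getElem π 0 hlen] at hm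
    simp [hlen, hj, hm])

theorem betaColCount_eq_zero (hπ : π.Pairwise (· ≥ ·)) {m j : ℕ} (hm : π.getD m 0 = m)
    (hj : m < j) : betaColCount π j = 0 := by
  rw [betaColCount, List.length_eq_zero_iff, List.filter_eq_nil_iff]
  intro i _
  simp only [decide_eq_true_eq, not_and]
  intro hji
  have : π.getD i 0 ≤ π.getD m 0 := List.antitone_getD_of_pairwise_ge hπ (by omega)
  omega

theorem betaOf_eq_map_range (hπ : π.Pairwise (· ≥ ·)) {m : ℕ} (hm : π.getD m 0 = m)
    (hlen : m < π.length) : betaOf π = (List.range m).map (fun j => betaColCount π (j + 1)) := by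
  rw [betaOf, show π.length = m + (π.length - m) by omega, List.range_add, List.map_append,
    List.filter_append, List.map_map, List.filter_eq_self.2, List.filter_eq_nil_iff.2,
    List.append_nil]
  · simp only [List.mem_map, List.mem_range, Function.comp_apply, forall_exists_index, and_imp]
    rintro _ j - rfl
    simp [betaColCount_eq_zero hπ hm (by omega : m < m + j + 1)]
  · simp only [List.mem_map, List.mem_range, forall_exists_index, and_imp]
    rintro _ j hj rfl
    simpa using (betaColCount_pos hm hlen (by omega : j + 1 ≤ m)).ne'

theorem betaColCount_self (hπ : π.Pairwise (· ≥ ·)) (m : ℕ) :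
    betaColCount π m = π.countP (m ≤ ·) - m := by
  have hT : π.countP (m ≤ ·) ≤ π.length := List.countP_le_length
  rw [betaColCount, ← List.countP_eq_length_filter, ← List.nodup_range.card_eq_countP,
    List.toFinset_range, ← Nat.card_Ico]
  congr 1
  ext i
  simp only [mem_filter, mem_range, mem_Ico]
  constructor
  · rintro ⟨hi, hmi, hle⟩
    exact ⟨hmi, (List.le_getD_iff_lt_countP hπ m hi).1 hle⟩
  · rintro ⟨hmi, hiT⟩
    exact ⟨by omega, hmi, (List.le_getD_iff_lt_countP hπ m (by omega)).2 hiT⟩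

theorem getLast?_betaOf (hπ : π.Pairwise (· ≥ ·)) {m : ℕ} (hm : π.getD m 0 = m) (hm0 : 0 < m) :
    (betaOf π).getLast? = some (π.countP (m ≤ ·) - m) := by
  have hlen := List.lt_length_of_getD_eq hm hm0
  rw [betaOf_eq_map_range hπ hm hlen, List.getLast?_eq_getElem?, List.length_map,
    List.length_range, List.getElem?_map, List.getElem?_range (by omega), Option.map_some,
    Nat.sub_add_cancel hm0, betaColCount_self hπ m]

end Partition

section SplitGraph

variable {V : Type*} [Fintype V] {G : SimpleGraph V} {K S : Finset V} {u : V}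

namespace IsKS

theorem card_inter_le_one_of_isIndepSet [DecidableEq V] (hKS : IsKS G K S) {s : Finset V}
    (hs : IsIndepSet G s) :
    #(s ∩ K) ≤ 1 :=
  card_le_one.2 fun x hx y hy => by
    by_contra hxy
    rw [mem_inter] at hx hy
    exact hs hx.1 hy.1 hxy (hKS.2.2.1 hx.2 hy.2 hxy)

theorem card_eq_card_inter_add [DecidableEq V] (hKS : IsKS G K S) (s : Finset V) :
    #s = #(s ∩ K) + #(s ∩ S) := by
  have : s \ K = s ∩ S := by
    ext v
    have := hKS.1 v
    have : v ∈ K → v ∉ S := fun h => disjoint_left.1 hKS.2.1 h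
    simp only [mem_sdiff, mem_inter]
    tauto
  rw [← this, card_inter_add_card_sdiff]

theorem forall_exists_not_adj_of_maximal (hKS : IsKS G K S)
    (hmax : ∀ K' S', IsKS G K' S' → #K' ≤ #K) : ∀ w ∈ S, ∃ x ∈ K, ¬ G.Adj w x := by
  classical
  intro w hw
  by_contra! hall
  have hwK : w ∉ K := disjoint_right.1 hKS.2.1 hw
  have hmove : IsKS G (insert w K) (S.erase w) := by
    refine ⟨fun v => ?_, ?_, ?_, hKS.2.2.2.mono (by simp)⟩
    · by_cases hv : v = w
      · simp [hv]
      · simpa [hv] using hKS.1 v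
    · simpa [disjoint_insert_left, hKS.2.1] using hKS.2.1.mono_right (erase_subset w S)
    · rw [coe_insert]
      exact hKS.2.2.1.insert fun x hx _ => (hall x hx)
  have := hmax _ _ hmove
  rw [card_insert_of_notMem hwK] at this
  omega

theorem cliqueNum_eq (hKS : IsKS G K S) (hS : ∀ w ∈ S, ∃ x ∈ K, ¬ G.Adj w x) :
    cliqueNum G = #K := by
  classical
  refine IsGreatest.csSup_eq ⟨⟨K, hKS.2.2.1, rfl⟩, ?_⟩
  rintro _ ⟨s, hs, rfl⟩
  rw [hKS.card_eq_card_inter_add s]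
  obtain hsS | ⟨w, hsw⟩ := (s ∩ S).eq_empty_or_nonempty
  · simpa [hsS] using card_le_card inter_subset_right
  rw [mem_inter] at hsw
  obtain ⟨x, hx, hwx⟩ := hS w hsw.2
  have hxs : x ∉ s := fun hxs =>
    hwx (hs hsw.1 hxs fun h => disjoint_left.1 hKS.2.1 hx (h ▸ hsw.2))
  have hle : #(s ∩ S) ≤ 1 := card_le_one.2 fun y hy z hz => by
    by_contra hyz
    rw [mem_inter] at hy hz
    exact hKS.2.2.2 hy.2 hz.2 hyz (hs hy.1 hz.1 hyz)
  have : s ∩ K ⊂ K := ssubset_of_subset_of_ne inter_subset_right fun h =>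
    hxs (mem_inter.1 (h.symm ▸ hx : x ∈ s ∩ K)).1
  have := card_lt_card this
  omega

theorem exists_isIndepSet_card_gt (hKS : IsKS G K S) (hne : #S ≠ indepNum G) :
    ∃ I : Finset V, IsIndepSet G I ∧ #S < #I := by
  have hbdd : BddAbove {n | ∃ s : Finset V, IsIndepSet G s ∧ #s = n} :=
    ⟨Fintype.card V, by rintro _ ⟨s, -, rfl⟩; exact card_le_univ s⟩
  have hS : #S ∈ {n | ∃ s : Finset V, IsIndepSet G s ∧ #s = n} := ⟨S, hKS.2.2.2, rfl⟩
  obtain ⟨I, hI, hcard⟩ := Nat.sSup_mem ⟨_, hS⟩ hbdd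
  exact ⟨I, hI, hcard ▸ (le_csSup hbdd hS).lt_of_ne hne⟩

theorem chromNum_eq (hKS : IsKS G K S) (hS : ∀ w ∈ S, ∃ x ∈ K, ¬ G.Adj w x) :
    chromNum G = #K := by
  classical
  choose! f hfK hf using hS
  let c : V → K := fun v => if hv : v ∈ K then ⟨v, hv⟩ else ⟨f v, hfK v ((hKS.1 v).resolve_left hv)⟩
  have hcol : G.Colorable #K := by
    refine Fintype.card_coe K ▸ (SimpleGraph.Coloring.mk c fun {v w} hvw hc => ?_).colorable
    have hv := hKS.1 v
    have hw := hKS.1 w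
    by_cases hvK : v ∈ K <;> by_cases hwK : w ∈ K <;>
      simp only [c, hvK, hwK, dite_true, dite_false, Subtype.mk.injEq] at hc
    · exact G.loopless.irrefl _ (hc ▸ hvw)
    · exact hf w (hw.resolve_left hwK) (hc ▸ hvw.symm)
    · exact hf v (hv.resolve_left hvK) (hc ▸ hvw)
    · exact hKS.2.2.2 (hv.resolve_left hvK) (hw.resolve_left hwK) hvw.ne hvw
  exact le_antisymm (Nat.sInf_le hcol)
    (le_csInf ⟨_, hcol⟩ fun _ hn => hKS.2.2.1.card_le_of_colorable hn)

theorem compl_insert_erase [DecidableEq V] (hKS : IsKS G K S)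
    (huS : ∀ w ∈ S, ¬ G.Adj u w) : IsKS Gᶜ (insert u S) (K.erase u) := by
  refine ⟨fun v => ?_, ?_, ?_, ?_⟩
  · by_cases hv : v = u
    · simp [hv]
    · simpa [hv, or_comm] using hKS.1 v
  · rw [disjoint_insert_left]
    exact ⟨notMem_erase u K, hKS.2.1.symm.mono_right (erase_subset u K)⟩
  · rw [coe_insert]
    refine (G.isClique_compl.2 hKS.2.2.2).insert fun w hw huw => ?_
    exact (SimpleGraph.compl_adj G u w).2 ⟨huw, huS w hw⟩
  · intro x hx y hy hxy hadj
    exact ((SimpleGraph.compl_adj G x y).1 hadj).2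
      (hKS.2.2.1 (mem_of_mem_erase hx) (mem_of_mem_erase hy) hxy)

theorem isNG (hKS : IsKS G K S) (hu : u ∈ K) (huS : ∀ w ∈ S, ¬ G.Adj u w)
    (hS : ∀ w ∈ S, ∃ x ∈ K, ¬ G.Adj w x) : IsNG G := by
  classical
  have hcompl : chromNum Gᶜ = #S + 1 := by
    rw [(hKS.compl_insert_erase huS).chromNum_eq fun w hw => ⟨u, mem_insert_self u S,
      fun h => ((SimpleGraph.compl_adj G w u).1 h).2
        (hKS.2.2.1 (mem_of_mem_erase hw) hu (ne_of_mem_erase hw))⟩,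
      card_insert_of_notMem (disjoint_left.1 hKS.2.1 hu)]
  have hV : #K + #S = Fintype.card V := by
    rw [← card_union_of_disjoint hKS.2.1, ← card_univ]
    exact congrArg card (eq_univ_iff_forall.2 fun v => mem_union.2 (hKS.1 v))
  rw [IsNG, hKS.chromNum_eq hS, hcompl]
  omega

end IsKS

theorem IsUnbalancedSplit.exists_isKS_anticomplete (hG : IsUnbalancedSplit G) :
    ∃ K S u, IsKS G K S ∧ u ∈ K ∧ (∀ w ∈ S, ¬ G.Adj u w) ∧ ∀ w ∈ S, ∃ x ∈ K, ¬ G.Adj w x := by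
  classical
  obtain ⟨⟨K₀, S₀, hKS₀⟩, hunbal⟩ := hG
  obtain ⟨K, hK, hmax⟩ := exists_max_image {K | ∃ S, IsKS G K S} card
    ⟨K₀, by simpa using ⟨S₀, hKS₀⟩⟩
  obtain ⟨S, hKS⟩ : ∃ S, IsKS G K S := by simpa using hK
  have hS := hKS.forall_exists_not_adj_of_maximal fun K' S' h => hmax K' (by simpa using ⟨S', h⟩)
  obtain ⟨I, hI, hIS⟩ := hKS.exists_isIndepSet_card_gt fun h =>
    hunbal ⟨K, S, hKS, (hKS.cliqueNum_eq hS).symm, h⟩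
  have hsplit := hKS.card_eq_card_inter_add I
  have hIK := hKS.card_inter_le_one_of_isIndepSet hI
  have hSI : S ⊆ I := inter_eq_right.1 <|
    eq_of_subset_of_card_le inter_subset_right (by omega)
  obtain ⟨u, hu⟩ := card_eq_one.1 (show #(I ∩ K) = 1 by
    have := card_le_card (inter_subset_right : I ∩ S ⊆ S); omega)
  have hu' : u ∈ I ∩ K := hu ▸ mem_singleton_self u
  rw [mem_inter] at hu'
  exact ⟨K, S, u, hKS, hu'.2, fun w hw =>
    hI hu'.1 (hSI hw) (fun h => disjoint_left.1 hKS.2.1 hu'.2 (h ▸ hw)), hS⟩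

section Degree

variable [DecidableRel G.Adj]

theorem HasDegSeq.countP_le_eq_card_filter {π : List ℕ} (hπ : HasDegSeq G π) (c : ℕ) :
    π.countP (c ≤ ·) = #{v | c ≤ G.degree v} := by
  rw [← Multiset.coe_countP, hπ.2, Multiset.countP_map]
  rfl

namespace IsKS

theorem card_sub_one_le_degree (hKS : IsKS G K S) {v : V} (hv : v ∈ K) : #K - 1 ≤ G.degree v := by
  classical
  rw [← card_erase_of_mem hv, ← G.card_neighborFinset_eq_degree]
  exact card_le_card fun y hy => (G.mem_neighborFinset v y).2 <|
    hKS.2.2.1 hv (mem_of_mem_erase hy) (ne_of_mem_erase hy).symm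

theorem degree_le_card_sub_one (hKS : IsKS G K S) {w x : V} (hw : w ∈ S) (hx : x ∈ K)
    (hwx : ¬ G.Adj w x) : G.degree w ≤ #K - 1 := by
  classical
  rw [← card_erase_of_mem hx, ← G.card_neighborFinset_eq_degree]
  refine card_le_card fun y hy => mem_erase.2 ⟨?_, ?_⟩
  · rintro rfl
    exact hwx ((G.mem_neighborFinset w _).1 hy)
  · have hadj := (G.mem_neighborFinset w y).1 hy
    exact (hKS.1 y).resolve_right fun hy => hKS.2.2.2 hw hy hadj.ne hadj

theorem degree_eq_card_sub_one (hKS : IsKS G K S) (hu : u ∈ K) (huS : ∀ w ∈ S, ¬ G.Adj u w) :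
    G.degree u = #K - 1 := by
  classical
  refine le_antisymm ?_ (hKS.card_sub_one_le_degree hu)
  rw [← card_erase_of_mem hu, ← G.card_neighborFinset_eq_degree]
  refine card_le_card fun y hy => ?_
  have hadj := (G.mem_neighborFinset u y).1 hy
  exact mem_erase.2 ⟨hadj.ne.symm, (hKS.1 y).resolve_right fun hy => huS y hy hadj⟩

theorem isClique_ngA_iff (hKS : IsKS G K S) (hu : u ∈ K) (huS : ∀ w ∈ S, ¬ G.Adj u w)
    (hS : ∀ w ∈ S, ∃ x ∈ K, ¬ G.Adj w x) :
    G.IsClique (ngA G) ↔ #{w ∈ S | G.degree w = #K - 1} = 0 := by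
  rw [card_eq_zero, filter_eq_empty_iff, ngA, hKS.chromNum_eq hS]
  constructor
  · intro hcl w hw hdeg
    exact huS w hw (hcl (hKS.degree_eq_card_sub_one hu huS) hdeg
      fun h => disjoint_left.1 hKS.2.1 hu (h ▸ hw))
  · intro h x hx y hy hxy
    have hmem : ∀ v, G.degree v = #K - 1 → v ∈ K := fun v hv =>
      (hKS.1 v).resolve_right fun hvS => h hvS hv
    exact hKS.2.2.1 (hmem x hx) (hmem y hy) hxy

theorem isIndepSet_ngA_iff (hKS : IsKS G K S) (hu : u ∈ K) (huS : ∀ w ∈ S, ¬ G.Adj u w)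
    (hS : ∀ w ∈ S, ∃ x ∈ K, ¬ G.Adj w x) :
    IsIndepSet G (ngA G) ↔ #{v ∈ K | G.degree v = #K - 1} ≤ 1 := by
  rw [card_le_one, ngA, hKS.chromNum_eq hS]
  constructor
  · intro hind x hx y hy
    rw [mem_filter] at hx hy
    by_contra hxy
    exact hind hx.2 hy.2 hxy (hKS.2.2.1 hx.1 hy.1 hxy)
  · intro h x hx y hy hxy hadj
    have hdeg_u := hKS.degree_eq_card_sub_one hu huS
    have eq_u : ∀ v, G.degree v = #K - 1 → v ∈ K → v = u := fun v hv hvK =>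
      h v (mem_filter.2 ⟨hvK, hv⟩) u (mem_filter.2 ⟨hu, hdeg_u⟩)
    rcases hKS.1 x with hxK | hxS <;> rcases hKS.1 y with hyK | hyS
    · exact hxy ((eq_u x hx hxK).trans (eq_u y hy hyK).symm)
    · exact huS y hyS (eq_u x hx hxK ▸ hadj)
    · exact huS x hxS (eq_u y hy hyK ▸ hadj.symm)
    · exact hKS.2.2.2 hxS hyS hxy hadj

theorem card_filter_card_sub_one_le_degree (hKS : IsKS G K S)
    (hS : ∀ w ∈ S, ∃ x ∈ K, ¬ G.Adj w x) :
    #{v | #K - 1 ≤ G.degree v} = #K + #{w ∈ S | G.degree w = #K - 1} := by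
  classical
  rw [← card_union_of_disjoint (hKS.2.1.mono_right (filter_subset _ _))]
  congr 1
  ext v
  simp only [mem_filter, mem_univ, true_and, mem_union]
  constructor
  · intro hdeg
    refine (hKS.1 v).imp id fun hv => ⟨hv, le_antisymm ?_ hdeg⟩
    obtain ⟨x, hx, hvx⟩ := hS v hv
    exact hKS.degree_le_card_sub_one hv hx hvx
  · rintro (hv | ⟨-, hv⟩)
    · exact hKS.card_sub_one_le_degree hv
    · exact hv.ge

theorem card_filter_card_le_degree_add (hKS : IsKS G K S) (hS : ∀ w ∈ S, ∃ x ∈ K, ¬ G.Adj w x) :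
    #{v | #K ≤ G.degree v} + #{v ∈ K | G.degree v = #K - 1} = #K := by
  have : ({v | #K ≤ G.degree v} : Finset V) = {v ∈ K | ¬ G.degree v = #K - 1} := by
    ext v
    simp only [mem_filter, mem_univ, true_and]
    constructor
    · intro hdeg
      have hvK : v ∈ K := (hKS.1 v).resolve_right fun hv => by
        obtain ⟨x, hx, hvx⟩ := hS v hv
        have := hKS.degree_le_card_sub_one hv hx hvx
        have := card_pos.2 ⟨x, hx⟩
        omega
      have := card_pos.2 ⟨v, hvK⟩
      exact ⟨hvK, by omega⟩
    · rintro ⟨hv, hdeg⟩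
      have := hKS.card_sub_one_le_degree hv
      omega
  rw [this, add_comm, card_filter_add_card_filter_not]

end IsKS

end Degree

end SplitGraph

/-- Let G be an unbalanced split graph with no isolated vertices and degree
sequence π.  Then G is NG-1 iff the smallest part of β(π) equals 1, and G is NG-2 iff the
smallest part of α(π) is at least 2. -/
theorem stmt16 {V : Type} [Fintype V] (G : SimpleGraph V) [DecidableRel G.Adj]
    (hG : IsUnbalancedSplit G) (hiso : NoIsolated G) (π : List ℕ) (hπ : HasDegSeq G π) :
    (IsNG1 G ↔ (betaOf π).getLast? = some 1) ∧
      (IsNG2 G ↔ ∀ x ∈ alphaOf π, 2 ≤ x) := by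
  obtain ⟨K, S, u, hKS, hu, huS, hS⟩ := hG.exists_isKS_anticomplete
  have hk : 2 ≤ #K := by
    have := hiso u
    rw [hKS.degree_eq_card_sub_one hu huS] at this
    omega
  have hAK : 1 ≤ #{v ∈ K | G.degree v = #K - 1} :=
    card_pos.2 ⟨u, mem_filter.2 ⟨hu, hKS.degree_eq_card_sub_one hu huS⟩⟩
  have hlow := hKS.card_filter_card_sub_one_le_degree hS
  have hhigh := hKS.card_filter_card_le_degree_add hS
  have hk1 : #K - 1 + 1 = #K := Nat.sub_add_cancel (by omega)
  have hm : π.getD (#K - 1) 0 = #K - 1 :=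
    List.getD_eq_of_countP hπ.1 (by rw [hπ.countP_le_eq_card_filter]; omega)
      (by rw [hk1, hπ.countP_le_eq_card_filter]; omega)
  have hNG := hKS.isNG hu huS hS
  constructor
  · rw [IsNG1, and_iff_right hNG, hKS.isClique_ngA_iff hu huS hS,
      getLast?_betaOf hπ.1 hm (by omega), hπ.countP_le_eq_card_filter, hlow, Option.some_inj]
    omega
  · rw [IsNG2, and_iff_right hNG, hKS.isIndepSet_ngA_iff hu huS hS,
      forall_two_le_alphaOf_iff hπ.1 hm, hk1, hπ.countP_le_eq_card_filter]
    omega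
end

section
/- Every unbalanced split graph with no isolated vertices is an NG-1 graph or an NG-2 graph (or both). -/
/-
For a split graph, choose a KS-partition `(K, S)` with `|K|` as large as possible. Then every
vertex of `S` misses some vertex of `K`, so sending each vertex of `S` to such a non-neighbour and
fixing `K` is a proper `|K|`-colouring; hence `χ(G) = ω(G) = |K|`. Applied to the complement,
`χ(Ḡ) = α(G)`. An independent set meets the clique `K` at most once, so `α(G) ≤ |S| + 1`, and
unbalancedness forces equality; thus `χ(G) + χ(Ḡ) = |K| + |S| + 1 = p + 1`.

For the vertices of degree `|K| - 1`: such a vertex of `K` is adjacent to exactly `K` minus itself,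
and such a vertex of `S` misses exactly one vertex of `K`. If some vertex of `S` has degree
`|K| - 1`, the vertices of degree `|K| - 1` in `K` have no neighbour in `S` and at most one of them
exists, so they form an independent set; otherwise they all lie in `K` and form a clique.
-/

open Finset

variable {V : Type*} {G : SimpleGraph V}

lemma SimpleGraph.IsClique.card_inter_le_one_of_isIndepSet [DecidableEq V] {s t : Finset V}
    (hs : G.IsClique (s : Set V)) (ht : G.IsIndepSet (t : Set V)) : #(s ∩ t) ≤ 1 := by
  refine card_le_one.2 fun a ha b hb => ?_
  rw [mem_inter] at ha hb
  by_contra hab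
  exact ht ha.2 hb.2 hab (hs ha.1 hb.1 hab)

variable [Fintype V]

lemma indepNum_eq_cliqueNum_compl (G : SimpleGraph V) : indepNum G = cliqueNum Gᶜ := by
  simp only [indepNum, cliqueNum, SimpleGraph.isNClique_compl, SimpleGraph.isNIndepSet_iff]
  rfl

lemma colorable_chromNum (G : SimpleGraph V) : G.Colorable (chromNum G) :=
  Nat.sInf_mem (s := {n | G.Colorable n}) ⟨_, G.colorable_of_fintype⟩

lemma cliqueNum_le_chromNum (G : SimpleGraph V) : cliqueNum G ≤ chromNum G := by
  obtain ⟨s, hs⟩ := G.exists_isNClique_cliqueNum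
  show G.cliqueNum ≤ _
  exact hs.card_eq ▸ hs.isClique.card_le_of_colorable (colorable_chromNum G)

namespace IsKS

variable {K S : Finset V}

lemma mem_of_notMem (h : IsKS G K S) {v : V} (hv : v ∉ K) : v ∈ S :=
  (h.1 v).resolve_left hv

lemma card_add_card (h : IsKS G K S) : #K + #S = Fintype.card V := by
  classical
  rw [← card_union_of_disjoint h.2.1, eq_univ_of_forall fun v => mem_union.2 (h.1 v), card_univ]

lemma compl (h : IsKS G K S) : IsKS Gᶜ S K :=
  ⟨fun v => (h.1 v).symm, h.2.1.symm, G.isClique_compl.2 h.2.2.2, G.isIndepSet_compl.2 h.2.2.1⟩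

lemma insert_erase [DecidableEq V] (h : IsKS G K S) {s : V} (hadj : ∀ k ∈ K, G.Adj s k) :
    IsKS G (insert s K) (S.erase s) := by
  refine ⟨fun v => ?_, ?_, ?_, h.2.2.2.mono (by simp)⟩
  · by_cases hv : v = s
    · exact .inl (hv ▸ mem_insert_self s K)
    · exact (h.1 v).imp (mem_insert_of_mem ·) (mem_erase_of_ne_of_mem hv ·)
  · rw [disjoint_insert_left]
    exact ⟨notMem_erase s S, h.2.1.mono_right (erase_subset s S)⟩
  · rw [coe_insert]
    exact h.2.2.1.insert fun k hk _ => hadj k hk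

lemma card_le_cliqueNum (h : IsKS G K S) : #K ≤ cliqueNum G :=
  SimpleGraph.IsClique.card_le_cliqueNum (tc := h.2.2.1)

lemma cliqueNum_le_card_add_one (h : IsKS G K S) : cliqueNum G ≤ #K + 1 := by
  classical
  show G.cliqueNum ≤ _
  obtain ⟨t, ht⟩ := G.exists_isNClique_cliqueNum
  have hout : t \ K ⊆ t ∩ S := fun v hv =>
    mem_inter.2 ⟨(mem_sdiff.1 hv).1, h.mem_of_notMem (mem_sdiff.1 hv).2⟩
  have := (card_le_card hout).trans (ht.isClique.card_inter_le_one_of_isIndepSet h.2.2.2)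
  have := card_le_card_sdiff_add_card (s := t) (t := K)
  rw [ht.card_eq] at this
  omega

lemma card_le_indepNum (h : IsKS G K S) : #S ≤ indepNum G :=
  indepNum_eq_cliqueNum_compl G ▸ h.compl.card_le_cliqueNum

lemma indepNum_le_card_add_one (h : IsKS G K S) : indepNum G ≤ #S + 1 :=
  indepNum_eq_cliqueNum_compl G ▸ h.compl.cliqueNum_le_card_add_one

lemma colorable_card (h : IsKS G K S) (hmiss : ∀ s ∈ S, ∃ k ∈ K, ¬ G.Adj s k) :
    G.Colorable #K := by
  have : ∀ v, ∃ k ∈ K, (v ∈ K → k = v) ∧ (v ∉ K → ¬ G.Adj v k) := fun v => by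
    by_cases hv : v ∈ K
    · exact ⟨v, hv, fun _ => rfl, absurd hv⟩
    · obtain ⟨k, hk, hvk⟩ := hmiss v (h.mem_of_notMem hv)
      exact ⟨k, hk, (absurd · hv), fun _ => hvk⟩
  choose φ hφK hφ_fix hφ_miss using this
  have hproper : ∀ {a b : V}, G.Adj a b → φ a ≠ φ b := fun {a b} hab heq => by
    by_cases ha : a ∈ K <;> by_cases hb : b ∈ K
    · exact hab.ne (by rw [← hφ_fix a ha, ← hφ_fix b hb, heq])
    · exact hφ_miss b hb (by rw [← heq, hφ_fix a ha]; exact hab.symm)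
    · exact hφ_miss a ha (by rw [heq, hφ_fix b hb]; exact hab)
    · exact h.2.2.2 (h.mem_of_notMem ha) (h.mem_of_notMem hb) hab.ne hab
  simpa using (SimpleGraph.Coloring.mk (G := G) (fun v => (⟨φ v, hφK v⟩ : K))
    fun hab heq => hproper hab (congrArg Subtype.val heq)).colorable

lemma chromNum_eq_card (h : IsKS G K S) (hmiss : ∀ s ∈ S, ∃ k ∈ K, ¬ G.Adj s k) :
    chromNum G = #K :=
  le_antisymm (Nat.sInf_le (h.colorable_card hmiss))
    (h.card_le_cliqueNum.trans (cliqueNum_le_chromNum G))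

lemma cliqueNum_eq_card (h : IsKS G K S) (hmiss : ∀ s ∈ S, ∃ k ∈ K, ¬ G.Adj s k) :
    cliqueNum G = #K :=
  le_antisymm ((cliqueNum_le_chromNum G).trans (h.chromNum_eq_card hmiss).le) h.card_le_cliqueNum

section Degree

variable [DecidableRel G.Adj]

lemma neighborFinset_subset (h : IsKS G K S) {s : V} (hs : s ∈ S) : G.neighborFinset s ⊆ K :=
  fun v hv =>
    have hsv := (SimpleGraph.mem_neighborFinset G s v).1 hv
    (h.1 v).resolve_right fun hvS => h.2.2.2 hs hvS hsv.ne hsv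

lemma not_adj_of_degree_eq (h : IsKS G K S) {k s : V} (hk : k ∈ K) (hdeg : G.degree k = #K - 1)
    (hs : s ∈ S) : ¬ G.Adj k s := by
  classical
  intro hks
  have hsK : s ∉ K := disjoint_right.1 h.2.1 hs
  have hsub : insert s (K.erase k) ⊆ G.neighborFinset k := by
    refine insert_subset ((SimpleGraph.mem_neighborFinset G k s).2 hks) fun v hv => ?_
    exact (SimpleGraph.mem_neighborFinset G k v).2
      (h.2.2.1 hk (mem_of_mem_erase hv) (ne_of_mem_erase hv).symm)
  have := card_le_card hsub
  rw [card_insert_of_notMem (fun hs' => hsK (mem_of_mem_erase hs')), card_erase_of_mem hk,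
    SimpleGraph.card_neighborFinset_eq_degree, hdeg] at this
  have := card_pos.2 ⟨k, hk⟩
  omega

lemma eq_of_degree_eq_of_not_adj (h : IsKS G K S) {s u v : V} (hs : s ∈ S)
    (hdeg : G.degree s = #K - 1) (hu : u ∈ K) (hv : v ∈ K) (hsu : ¬ G.Adj s u)
    (hsv : ¬ G.Adj s v) : u = v := by
  classical
  by_contra huv
  have hsub : G.neighborFinset s ⊆ (K.erase u).erase v := fun w hw => by
    have hsw := (SimpleGraph.mem_neighborFinset G s w).1 hw
    exact mem_erase.2 ⟨fun hwv => hsv (hwv ▸ hsw),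
      mem_erase.2 ⟨fun hwu => hsu (hwu ▸ hsw), h.neighborFinset_subset hs hw⟩⟩
  have := card_le_card hsub
  rw [card_erase_of_mem (mem_erase.2 ⟨Ne.symm huv, hv⟩), card_erase_of_mem hu,
    SimpleGraph.card_neighborFinset_eq_degree, hdeg] at this
  have := one_lt_card.2 ⟨u, hu, v, hv, huv⟩
  omega

lemma isClique_or_isIndepSet_degree_eq (h : IsKS G K S) :
    G.IsClique {v | G.degree v = #K - 1} ∨ IsIndepSet G {v | G.degree v = #K - 1} := by
  by_cases hS : ∃ s ∈ S, G.degree s = #K - 1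
  · obtain ⟨s, hs, hdeg⟩ := hS
    refine .inr fun u hu v hv huv => ?_
    rcases h.1 u with huK | huS <;> rcases h.1 v with hvK | hvS
    · exact absurd (h.eq_of_degree_eq_of_not_adj hs hdeg huK hvK
        (fun hsu => h.not_adj_of_degree_eq huK hu hs hsu.symm)
        (fun hsv => h.not_adj_of_degree_eq hvK hv hs hsv.symm)) huv
    · exact h.not_adj_of_degree_eq huK hu hvS
    · exact fun hvu => h.not_adj_of_degree_eq hvK hv huS hvu.symm
    · exact h.2.2.2 huS hvS huv
  · push Not at hS
    exact .inl (h.2.2.1.subset fun v hv => (h.1 v).resolve_right (hS v · hv))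

end Degree

end IsKS

lemma IsSplit.compl (hG : IsSplit G) : IsSplit Gᶜ :=
  let ⟨K, S, h⟩ := hG
  ⟨S, K, h.compl⟩

lemma IsSplit.exists_isKS_forall_exists_not_adj (hG : IsSplit G) :
    ∃ K S, IsKS G K S ∧ ∀ s ∈ S, ∃ k ∈ K, ¬ G.Adj s k := by
  classical
  let parts := univ.filter fun p : Finset V × Finset V => IsKS G p.1 p.2
  obtain ⟨⟨K, S⟩, hKS, hmax⟩ := parts.exists_max_image (fun p => #p.1) <| by
    obtain ⟨K, S, h⟩ := hG
    exact ⟨(K, S), by simpa [parts] using h⟩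
  have h : IsKS G K S := by simpa [parts] using hKS
  refine ⟨K, S, h, fun s hs => ?_⟩
  by_contra! hadj
  have := hmax (insert s K, S.erase s) (by simpa [parts] using h.insert_erase hadj)
  dsimp only at this
  rw [card_insert_of_notMem (disjoint_right.1 h.2.1 hs)] at this
  omega

lemma IsSplit.chromNum_eq_cliqueNum (hG : IsSplit G) : chromNum G = cliqueNum G := by
  obtain ⟨K, S, h, hmiss⟩ := hG.exists_isKS_forall_exists_not_adj
  rw [h.chromNum_eq_card hmiss, h.cliqueNum_eq_card hmiss]

lemma IsUnbalancedSplit.isNG (hG : IsUnbalancedSplit G) : IsNG G := by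
  obtain ⟨K, S, h, hmiss⟩ := hG.1.exists_isKS_forall_exists_not_adj
  have hω := h.cliqueNum_eq_card hmiss
  have hα : indepNum G = #S + 1 := le_antisymm h.indepNum_le_card_add_one
    (h.card_le_indepNum.lt_of_ne fun hS => hG.2 ⟨K, S, h, hω.symm, hS⟩)
  rw [IsNG, hG.1.chromNum_eq_cliqueNum, hG.1.compl.chromNum_eq_cliqueNum,
    ← indepNum_eq_cliqueNum_compl, hω, hα, ← h.card_add_card, add_assoc]

theorem stmt17_general {V : Type} [Fintype V] (G : SimpleGraph V) [DecidableRel G.Adj]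
    (hG : IsUnbalancedSplit G) :
    IsNG1 G ∨ IsNG2 G := by
  obtain ⟨K, S, h, hmiss⟩ := hG.1.exists_isKS_forall_exists_not_adj
  have hA : ngA G = {v | G.degree v = #K - 1} := by
    rw [ngA, h.chromNum_eq_card hmiss]
  rcases h.isClique_or_isIndepSet_degree_eq with hcl | hind
  · exact .inl ⟨hG.isNG, hA ▸ hcl⟩
  · exact .inr ⟨hG.isNG, hA ▸ hind⟩

/-- Every unbalanced split graph with no isolated vertices is an NG-1 graph
or an NG-2 graph (or both). -/
theorem stmt17 {V : Type} [Fintype V] (G : SimpleGraph V) [DecidableRel G.Adj]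
    (hG : IsUnbalancedSplit G) (hiso : NoIsolated G) :
    IsNG1 G ∨ IsNG2 G :=
  stmt17_general G hG
end
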